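/- Let G be a loopless graph, v a vertex, and s = {v_0, ..., v_n} an independent set of G. Then the intersection of the subcomplexes A_{v_i} = I_{G − st(v_i)} * v_i over i = 0,...,n equals I_{G − st(v_0) − ... − st(v_n)} * Δ^n, where Δ^n is the simplex on the vertex set s; in particular this intersection is contractible. -/

import Mathlib

open scoped unitInterval

/-- The defining relation for the topological join of two spaces. -/
inductive JoinRel (X Y : Type*) :
    (X × Y × I) ⊕ (X ⊕ Y) → (X × Y × I) ⊕ (X ⊕ Y) → Prop
  | zero (x : X) (y : Y) : JoinRel X Y (.inl (x, y, 0)) (.inr (.inl x))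
  | one (x : X) (y : Y) : JoinRel X Y (.inl (x, y, 1)) (.inr (.inr y))

/-- The topological join `X * Y`. -/
def TopJoin (X Y : Type*) [TopologicalSpace X] [TopologicalSpace Y] : Type _ :=
  Quot (JoinRel X Y)

instance (X Y : Type*) [TopologicalSpace X] [TopologicalSpace Y] :
    TopologicalSpace (TopJoin X Y) := by
  unfold TopJoin; infer_instance

/-- The inclusion of the first factor into the join. -/
def TopJoin.inl {X Y : Type*} [TopologicalSpace X] [TopologicalSpace Y] (x : X) :
    TopJoin X Y :=
  Quot.mk _ (.inr (.inl x))

/-- The (unreduced) suspension, as the join with a two-point space. -/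
def Susp (X : Type*) [TopologicalSpace X] : Type _ := TopJoin X Bool

instance (X : Type*) [TopologicalSpace X] : TopologicalSpace (Susp X) :=
  inferInstanceAs (TopologicalSpace (TopJoin X Bool))

/-- The north pole of the suspension. -/
def suspApex (X : Type*) [TopologicalSpace X] : Susp X :=
  Quot.mk _ (.inr (.inr true))

/-- The wedge (one-point union) of two pointed spaces. -/
def Wedge (X Y : Type*) [TopologicalSpace X] [TopologicalSpace Y] (x0 : X) (y0 : Y) :
    Type _ :=
  Quot (fun a b : X ⊕ Y => a = Sum.inl x0 ∧ b = Sum.inr y0)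

instance (X Y : Type*) [TopologicalSpace X] [TopologicalSpace Y] (x0 : X) (y0 : Y) :
    TopologicalSpace (Wedge X Y x0 y0) := by
  unfold Wedge; infer_instance

/-- The wedge of a family of pointed spaces. -/
def WedgeFam {ι : Type*} (X : ι → Type*) [∀ i, TopologicalSpace (X i)]
    (pt : ∀ i, X i) : Type _ :=
  Quot (fun a b : Σ i, X i => ∃ i j, a = ⟨i, pt i⟩ ∧ b = ⟨j, pt j⟩)

instance {ι : Type*} (X : ι → Type*) [∀ i, TopologicalSpace (X i)] (pt : ∀ i, X i) :
    TopologicalSpace (WedgeFam X pt) := by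
  unfold WedgeFam; infer_instance

/-- The `k`-dimensional sphere. -/
abbrev nSphere (k : ℕ) : Type :=
  ↥(Metric.sphere (0 : EuclideanSpace ℝ (Fin (k + 1))) 1)

/-- A base point on the `k`-sphere. -/
noncomputable def sphereBase (k : ℕ) : nSphere k :=
  ⟨EuclideanSpace.single 0 1, by
    simp [EuclideanSpace.norm_single]⟩

/-- An abstract simplicial complex on a vertex set `V`. -/
structure AbsSimplicialComplex (V : Type*) where
  faces : Set (Finset V)
  down_closed : ∀ ⦃s⦄, s ∈ faces → ∀ ⦃t : Finset V⦄, t ⊆ s → t ∈ faces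

/-- The geometric realization of an abstract simplicial complex, as the space of
convex-combination weight functions supported on a face. -/
def AbsSimplicialComplex.space {V : Type*} (K : AbsSimplicialComplex V) : Type _ :=
  {f : V → ℝ // (∀ x, 0 ≤ f x) ∧
    ∃ s ∈ K.faces, (∀ x, x ∉ s → f x = 0) ∧ ∑ x ∈ s, f x = 1}

instance {V : Type*} (K : AbsSimplicialComplex V) : TopologicalSpace K.space := by
  unfold AbsSimplicialComplex.space; infer_instance

/-- The independence complex of a graph, restricted to vertices in `A`:
faces are the independent sets of `G` contained in `A`. -/
def indepComplexOn {V : Type*} (G : SimpleGraph V) (A : Set V) :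
    AbsSimplicialComplex V where
  faces := {s | ↑s ⊆ A ∧ ∀ a ∈ s, ∀ b ∈ s, ¬ G.Adj a b}
  down_closed := by
    intro s hs t ht
    exact ⟨fun x hx => hs.1 (ht hx), fun a ha b hb => hs.2 a (ht ha) b (ht hb)⟩

/-- The independence complex of a graph. -/
def indepComplex {V : Type*} (G : SimpleGraph V) : AbsSimplicialComplex V :=
  indepComplexOn G Set.univ

/-- The closed star of a vertex: the vertex together with its neighbors. -/
def stSet {V : Type*} (G : SimpleGraph V) (v : V) : Set V :=
  insert v (G.neighborSet v)

lemma indepComplexOn_mono {V : Type*} (G : SimpleGraph V) {A B : Set V} (h : A ⊆ B) :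
    (indepComplexOn G A).faces ⊆ (indepComplexOn G B).faces :=
  fun _ hs => ⟨fun x hx => h (hs.1 hx), hs.2⟩

/-- The inclusion of the realization of a subcomplex. -/
def inclMap {V : Type*} (K L : AbsSimplicialComplex V) (h : K.faces ⊆ L.faces) :
    C(K.space, L.space) where
  toFun := fun f => ⟨f.1, f.2.1, by
    obtain ⟨s, hs, h2⟩ := f.2.2
    exact ⟨s, h hs, h2⟩⟩
  continuous_toFun := Continuous.subtype_mk continuous_subtype_val _
/-- The cone over `K` with apex `v`, inside the same vertex set. -/
def coneAt {V : Type*} [DecidableEq V] (v : V) (K : AbsSimplicialComplex V) :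
    AbsSimplicialComplex V where
  faces := {s | s.erase v ∈ K.faces}
  down_closed := by
    intro s hs t ht
    exact K.down_closed hs (Finset.erase_subset_erase _ ht)

/-- The cone over `K` with a fresh apex vertex `none`. -/
def coneVertex {V : Type*} (K : AbsSimplicialComplex V) :
    AbsSimplicialComplex (Option V) where
  faces := {s | Finset.eraseNone s ∈ K.faces}
  down_closed := by
    intro s hs t ht
    refine K.down_closed hs ?_
    intro x hx
    rw [Finset.mem_eraseNone] at hx ⊢
    exact ht hx

/-- The join of two simplicial complexes on disjoint vertex sets. -/
def complexJoin {V W : Type*} (K : AbsSimplicialComplex V)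
    (L : AbsSimplicialComplex W) : AbsSimplicialComplex (V ⊕ W) where
  faces := {s | s.toLeft ∈ K.faces ∧ s.toRight ∈ L.faces}
  down_closed := by
    intro s hs t ht
    constructor
    · refine K.down_closed hs.1 ?_
      intro x hx; rw [Finset.mem_toLeft] at hx ⊢; exact ht hx
    · refine L.down_closed hs.2 ?_
      intro x hx; rw [Finset.mem_toRight] at hx ⊢; exact ht hx

/-- The disjoint union of two graphs. -/
def graphSum {V W : Type*} (G : SimpleGraph V) (H : SimpleGraph W) :
    SimpleGraph (V ⊕ W) where
  Adj a b :=
    match a, b with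
    | .inl x, .inl y => G.Adj x y
    | .inr x, .inr y => H.Adj x y
    | _, _ => False
  symm := by refine ⟨?_⟩; rintro (x | x) (y | y) h; exacts [G.adj_symm h, h.elim, h.elim, H.adj_symm h]
  loopless := by refine ⟨?_⟩; rintro (x | x) h; exacts [G.irrefl h, H.irrefl h]

/-- The subcomplex `A_u = I_{G - st(u)} * u` of the independence complex:
simplices `σ` with `σ ∪ {u}` independent. -/
def Afan {V : Type*} [DecidableEq V] (G : SimpleGraph V) (u : V) :
    AbsSimplicialComplex V where
  faces := {s | ∀ a ∈ insert u s, ∀ b ∈ insert u s, ¬ G.Adj a b}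
  down_closed := by
    intro s hs t ht a ha b hb
    exact hs a (Finset.insert_subset_insert u ht ha) b (Finset.insert_subset_insert u ht hb)

/-- The join of a complex with the full simplex on the vertex set `s`. -/
def joinSimplex {V : Type*} [DecidableEq V] (s : Finset V)
    (K : AbsSimplicialComplex V) : AbsSimplicialComplex V where
  faces := {t | t \ s ∈ K.faces}
  down_closed := by
    intro t ht r hr
    exact K.down_closed ht (Finset.sdiff_subset_sdiff hr (subset_refl s))

/-- The complex `K(G, v)` of Theorem 6.4: independent sets of `G - st(v)`
missing `W_u = lk(u) - v` entirely, for at least one neighbor `u` of `v`. -/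
def Kcomplex {V : Type*} (G : SimpleGraph V) (v : V) : AbsSimplicialComplex V where
  faces := {s | s ∈ (indepComplexOn G (stSet G v)ᶜ).faces ∧
      ∃ u, G.Adj v u ∧ ∀ w ∈ s, ¬ (G.Adj u w ∧ w ≠ v)}
  down_closed := by
    intro s hs t ht
    refine ⟨(indepComplexOn G (stSet G v)ᶜ).down_closed hs.1 ht, ?_⟩
    obtain ⟨u, hu, hw⟩ := hs.2
    exact ⟨u, hu, fun w hwt => hw w (ht hwt)⟩

/-- Auxiliary relation for subdividing the edge `uv` into a path of four edges
through three new vertices `0, 1, 2`. -/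
def sRel {V : Type*} (G : SimpleGraph V) (u v : V) :
    V ⊕ Fin 3 → V ⊕ Fin 3 → Prop
  | .inl x, .inl y => G.Adj x y ∧ ¬((x = u ∧ y = v) ∨ (x = v ∧ y = u))
  | .inl x, .inr i => (x = u ∧ i = 0) ∨ (x = v ∧ i = 2)
  | .inr i, .inr j => (i : ℕ) + 1 = (j : ℕ)
  | .inr _, .inl _ => False

/-- The graph obtained from `G` by replacing the edge `uv` by the path
`u - 0 - 1 - 2 - v` of four edges. -/
def subdivide4 {V : Type*} (G : SimpleGraph V) (u v : V) :
    SimpleGraph (V ⊕ Fin 3) where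
  Adj a b := sRel G u v a b ∨ sRel G u v b a
  symm := ⟨fun _ _ h => h.symm⟩
  loopless := by
    refine ⟨?_⟩
    rintro (x | i) h
    · rcases h with h | h <;> exact G.irrefl h.1
    · rcases h with h | h <;> (simp only [sRel] at h; omega)

lemma stSet_compl_subset {V : Type*} (G : SimpleGraph V) (v : V) :
    (stSet G v)ᶜ ⊆ ({v} : Set V)ᶜ :=
  Set.compl_subset_compl.mpr fun x hx => by
    rw [Set.mem_singleton_iff] at hx
    rw [hx]
    exact Set.mem_insert v _

/-- The inclusion of the realization of `I_{G - st(v)}` into that of `I_{G - v}`. -/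
def linkIncl {V : Type*} (G : SimpleGraph V) (v : V) :
    C((indepComplexOn G (stSet G v)ᶜ).space, (indepComplexOn G ({v} : Set V)ᶜ).space) :=
  inclMap _ _ (indepComplexOn_mono G (stSet_compl_subset G v))

/-!
Both sides consist of the finite sets `τ` for which `s ∪ τ` is independent: `τ ∈ A_v` says that
`τ ∪ {v}` is independent, and `τ \ s` avoiding every closed star `st(v)`, `v ∈ s`, says that
there is no edge between `s` and `τ \ s`. The join with the simplex on `s` is a cone with apex
any vertex `v ∈ s`, and the straight-line homotopy to the vertex `v` contracts it.
-/

namespace SimpleGraph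

variable {V : Type*} {G : SimpleGraph V}

lemma isIndepSet_union_iff {s t : Set V} :
    G.IsIndepSet (s ∪ t) ↔
      G.IsIndepSet s ∧ G.IsIndepSet t ∧ ∀ a ∈ s, ∀ b ∈ t, ¬ G.Adj a b := by
  refine Set.pairwise_union.trans (and_congr_right fun _ => and_congr_right fun _ => ?_)
  exact ⟨fun h a ha b hb hab => (h a ha b hb hab.ne).1 hab,
    fun h a ha b hb _ => ⟨h a ha b hb, fun hba => h a ha b hb hba.symm⟩⟩

lemma isIndepSet_insert_iff {v : V} {t : Set V} :
    G.IsIndepSet (insert v t) ↔ G.IsIndepSet t ∧ ∀ b ∈ t, ¬ G.Adj v b := by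
  rw [← Set.singleton_union, isIndepSet_union_iff]
  simp [Set.pairwise_singleton]

lemma isIndepSet_coe_finset_iff {t : Finset V} :
    G.IsIndepSet (t : Set V) ↔ ∀ a ∈ t, ∀ b ∈ t, ¬ G.Adj a b :=
  ⟨fun h _ ha _ hb hab => h ha hb hab.ne hab, fun h _ ha _ hb _ => h _ ha _ hb⟩

end SimpleGraph

open SimpleGraph

section IndependenceComplex

variable {V : Type*} {G : SimpleGraph V}

lemma notMem_stSet_iff {v w : V} : w ∉ stSet G v ↔ w ≠ v ∧ ¬ G.Adj v w := by
  simp [stSet]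

lemma mem_indepComplexOn_faces_iff {A : Set V} {t : Finset V} :
    t ∈ (indepComplexOn G A).faces ↔ ↑t ⊆ A ∧ G.IsIndepSet (t : Set V) :=
  and_congr_right' isIndepSet_coe_finset_iff.symm

variable [DecidableEq V]

lemma mem_Afan_faces_iff {u : V} {τ : Finset V} :
    τ ∈ (Afan G u).faces ↔ G.IsIndepSet (insert u (τ : Set V)) := by
  rw [← Finset.coe_insert, isIndepSet_coe_finset_iff]
  rfl

lemma mem_iInter_Afan_faces_iff {s τ : Finset V} (hne : s.Nonempty)
    (hs : G.IsIndepSet (s : Set V)) :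
    τ ∈ ⋂ v ∈ (s : Set V), (Afan G v).faces ↔ G.IsIndepSet ((s : Set V) ∪ τ) := by
  obtain ⟨v₀, hv₀⟩ := hne
  simp only [Set.mem_iInter, Finset.mem_coe, mem_Afan_faces_iff, isIndepSet_insert_iff,
    isIndepSet_union_iff, hs, true_and]
  exact ⟨fun h => ⟨(h v₀ hv₀).1, fun a ha => (h a ha).2⟩, fun h a ha => ⟨h.1, h.2 a ha⟩⟩

lemma mem_joinSimplex_indepComplexOn_faces_iff {s τ : Finset V}
    (hs : G.IsIndepSet (s : Set V)) :
    τ ∈ (joinSimplex s (indepComplexOn G (⋃ v ∈ (s : Set V), stSet G v)ᶜ)).faces ↔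
      G.IsIndepSet ((s : Set V) ∪ τ) := by
  have hdiff : (s : Set V) ∪ τ = (s : Set V) ∪ (↑(τ \ s) : Set V) := by
    rw [Finset.coe_sdiff, Set.union_sdiff_self]
  rw [hdiff, isIndepSet_union_iff, and_iff_right hs, and_comm]
  change τ \ s ∈ (indepComplexOn G _).faces ↔ _
  rw [mem_indepComplexOn_faces_iff]
  refine and_congr_left' ?_
  simp only [Set.subset_def, Set.mem_compl_iff, Set.mem_iUnion₂, not_exists, notMem_stSet_iff,
    Finset.mem_coe, Finset.mem_sdiff]
  exact ⟨fun h a ha b hb => (h b hb a ha).2,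
    fun h b hb a ha => ⟨fun hba => hb.2 (hba ▸ ha), h a ha b hb⟩⟩

end IndependenceComplex

namespace AbsSimplicialComplex

variable {V : Type*} [DecidableEq V] {K : AbsSimplicialComplex V} {v : V}

lemma sum_eq_one_of_support_subset (f : K.space) {t : Finset V} (ht : ∀ x ∉ t, f.1 x = 0) :
    ∑ x ∈ t, f.1 x = 1 := by
  obtain ⟨u, -, hu, hsum⟩ := f.2.2
  calc ∑ x ∈ t, f.1 x = ∑ x ∈ t ∪ u, f.1 x :=
        Finset.sum_subset Finset.subset_union_left fun x _ hx => ht x hx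
    _ = ∑ x ∈ u, f.1 x :=
        (Finset.sum_subset Finset.subset_union_right fun x _ hx => hu x hx).symm
    _ = 1 := hsum

def vertexPoint (K : AbsSimplicialComplex V) (v : V) (hv : {v} ∈ K.faces) : K.space :=
  ⟨Pi.single v 1, fun x => by simp [Pi.single_apply, apply_ite],
    {v}, hv, fun x hx => by simp_all, by simp⟩

def coneContraction (hcone : ∀ t ∈ K.faces, insert v t ∈ K.faces) (c : I) (f : K.space) :
    K.space :=
  ⟨(1 - c : ℝ) • f.1 + (c : ℝ) • Pi.single v 1,
    fun x => add_nonneg (mul_nonneg (sub_nonneg.2 c.2.2) (f.2.1 x))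
      (mul_nonneg c.2.1 (by simp [Pi.single_apply, apply_ite])), by
    obtain ⟨t, ht, hsupp, -⟩ := f.2.2
    refine ⟨insert v t, hcone t ht, fun x hx => ?_, ?_⟩
    · rw [Finset.mem_insert, not_or] at hx
      simp [hsupp x hx.2, hx.1]
    · have hf : ∑ x ∈ insert v t, f.1 x = 1 :=
        sum_eq_one_of_support_subset f fun x hx => hsupp x (by simp_all)
      simp [Finset.sum_add_distrib, ← Finset.mul_sum, hf]⟩

theorem contractibleSpace_of_forall_insert_mem (hv : {v} ∈ K.faces)
    (hcone : ∀ t ∈ K.faces, insert v t ∈ K.faces) : ContractibleSpace K.space := by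
  refine (contractible_iff_id_nullhomotopic _).2 ⟨vertexPoint K v hv, ⟨?_⟩⟩
  exact
    { toFun := fun p => coneContraction hcone p.1 p.2
      continuous_toFun := by unfold coneContraction; fun_prop
      map_zero_left := fun f => Subtype.ext (by simp [coneContraction])
      map_one_left := fun f => Subtype.ext (by simp [coneContraction]; rfl) }

end AbsSimplicialComplex

lemma joinSimplex_contractibleSpace {V : Type*} [DecidableEq V] {s : Finset V}
    {K : AbsSimplicialComplex V} {v : V} (hv : v ∈ s) (hK : ∅ ∈ K.faces) :
    ContractibleSpace (joinSimplex s K).space :=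
  AbsSimplicialComplex.contractibleSpace_of_forall_insert_mem (v := v)
    (show {v} \ s ∈ K.faces by
      rwa [Finset.sdiff_eq_empty_iff_subset.2 (Finset.singleton_subset_iff.2 hv)])
    fun t ht => show insert v t \ s ∈ K.faces by rwa [Finset.insert_sdiff_of_mem _ hv]

theorem inter_Afan_eq_join_simplex_general {V : Type} [DecidableEq V]
    (G : SimpleGraph V) (s : Finset V) (hne : s.Nonempty)
    (hindep : ∀ a ∈ s, ∀ b ∈ s, ¬ G.Adj a b) :
    (⋂ v ∈ (s : Set V), (Afan G v).faces) =
      (joinSimplex s (indepComplexOn G (⋃ v ∈ (s : Set V), stSet G v)ᶜ)).faces ∧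
    ContractibleSpace
      (joinSimplex s (indepComplexOn G (⋃ v ∈ (s : Set V), stSet G v)ᶜ)).space := by
  have hs : G.IsIndepSet (s : Set V) := isIndepSet_coe_finset_iff.2 hindep
  refine ⟨Set.ext fun τ => ?_, ?_⟩
  · rw [mem_iInter_Afan_faces_iff hne hs, mem_joinSimplex_indepComplexOn_faces_iff hs]
  · obtain ⟨v, hv⟩ := hne
    exact joinSimplex_contractibleSpace hv ⟨by simp, by simp⟩

/-- For an independent set `s = {v_0, …, v_n}` in `G`, the intersection
of the subcomplexes `A_{v_i} = I_{G − st(v_i)} * v_i` equals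
`I_{G − st(v_0) − ⋯ − st(v_n)} * Δ^n`; in particular it is contractible. -/
theorem inter_Afan_eq_join_simplex {V : Type} [Fintype V] [DecidableEq V]
    (G : SimpleGraph V) (s : Finset V) (hne : s.Nonempty)
    (hindep : ∀ a ∈ s, ∀ b ∈ s, ¬ G.Adj a b) :
    (⋂ v ∈ (s : Set V), (Afan G v).faces) =
      (joinSimplex s (indepComplexOn G (⋃ v ∈ (s : Set V), stSet G v)ᶜ)).faces ∧
    ContractibleSpace
      (joinSimplex s (indepComplexOn G (⋃ v ∈ (s : Set V), stSet G v)ᶜ)).space :=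
  inter_Afan_eq_join_simplex_general G s hne hindep
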